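/- arXiv:1604.05671 — 2 statements merged into one kernel-verified Lean document; each statement's English description precedes it below -/
import Mathlib

section
/- Let f be a multiplicative arithmetic function with complex values, let n be a positive integer, and suppose f(p) ≠ -1 for every prime p dividing n. Then ∑_{d | n} |μ(d)| ω(d) f(d) = (∑_{d | n} |μ(d)| f(d)) · (∑_{p | n} f(p)/(1 + f(p))), where the sum over p runs over the distinct primes dividing n. -/
/-!
A squarefree divisor of `n` is the product of a set `t` of primes of `n`, and on it `ω` is `#t`
and `f` is `∏_{p ∈ t} f p`. Both sides thus become sums over subsets of the primes of `n`: the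
right-hand factor `∑ ∏_{p ∈ t} f p` is `∏_{p ∣ n} (1 + f p)`, and adjoining one prime `a` to the
set of primes multiplies `∑ #t ∏_{p ∈ t} f p` by `1 + f a` and adds `f a ∏ (1 + f p)`, which
matches the right-hand side by induction.
-/

open ArithmeticFunction

namespace Finset

variable {ι K : Type*} [DecidableEq ι] [Field K]

theorem sum_powerset_card_mul_prod {g : ι → K} {s : Finset ι} (hg : ∀ i ∈ s, 1 + g i ≠ 0) :
    ∑ t ∈ s.powerset, (#t : K) * ∏ i ∈ t, g i =
      (∏ i ∈ s, (1 + g i)) * ∑ i ∈ s, g i / (1 + g i) := by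
  induction s using Finset.induction_on with
  | empty => simp
  | insert a s ha ih =>
    have ha' : 1 + g a ≠ 0 := hg a (mem_insert_self a s)
    have hinsert : ∀ t ∈ s.powerset,
        (#(insert a t) : K) * ∏ i ∈ insert a t, g i =
          g a * ((#t : K) * ∏ i ∈ t, g i) + g a * ∏ i ∈ t, g i := by
      intro t ht
      have hat : a ∉ t := fun h => ha (mem_powerset.mp ht h)
      rw [prod_insert hat, card_insert_of_notMem hat]
      push_cast
      ring
    rw [sum_powerset_insert ha, sum_congr rfl hinsert, sum_add_distrib, ← mul_sum, ← mul_sum,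
      ← prod_one_add, ih fun i hi => hg i (mem_insert_of_mem hi), prod_insert ha, sum_insert ha]
    field_simp
    ring

end Finset

namespace ArithmeticFunction

open Finset

theorem sum_divisors_natAbs_moebius_mul {R : Type*} [Semiring R] {n : ℕ} (hn : n ≠ 0)
    (F : ℕ → R) :
    ∑ d ∈ n.divisors, ((moebius d).natAbs : R) * F d =
      ∑ t ∈ n.primeFactors.powerset, F (∏ p ∈ t, p) := by
  have hsquarefree : ∀ d, ((moebius d).natAbs : R) * F d = if Squarefree d then F d else 0 := by
    intro d
    split_ifs with hd
    · simp [moebius_apply_of_squarefree hd, Int.natAbs_pow]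
    · simp [moebius_eq_zero_of_not_squarefree hd]
  rw [sum_congr rfl fun d _ => hsquarefree d, ← sum_filter, Nat.sum_divisors_filter_squarefree hn,
    Nat.factors_eq, List.toFinset_coe, Nat.toFinset_factors]
  exact sum_congr rfl fun t _ => by rw [prod_val]; rfl

end ArithmeticFunction

/-- For a multiplicative arithmetic function `f` with `f p ≠ -1` for
every prime `p ∣ n`,
`∑_{d ∣ n} |μ(d)| ω(d) f(d) = (∑_{d ∣ n} |μ(d)| f(d)) · (∑_{p ∣ n} f p / (1 + f p))`. -/
theorem stmt_5 (f : ArithmeticFunction ℂ) (hf : f.IsMultiplicative) (n : ℕ) (hn : 0 < n)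
    (hfp : ∀ p : ℕ, p.Prime → p ∣ n → f p ≠ -1) :
    ∑ d ∈ n.divisors, ((moebius d).natAbs : ℂ) * (d.primeFactors.card : ℂ) * f d =
      (∑ d ∈ n.divisors, ((moebius d).natAbs : ℂ) * f d) *
        (∑ p ∈ n.primeFactors, f p / (1 + f p)) := by
  have hf_prod {t} (ht : t ∈ n.primeFactors.powerset) : f (∏ p ∈ t, p) = ∏ p ∈ t, f p :=
    hf.map_prod_of_subset_primeFactors n t (Finset.mem_powerset.mp ht)
  have hω {t} (ht : t ∈ n.primeFactors.powerset) : (∏ p ∈ t, p).primeFactors = t :=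
    Nat.primeFactors_prod fun p hp =>
      Nat.prime_of_mem_primeFactors (Finset.mem_powerset.mp ht hp)
  have hfp_ne : ∀ p ∈ n.primeFactors, 1 + f p ≠ 0 := fun p hp h =>
    hfp p (Nat.prime_of_mem_primeFactors hp) (Nat.dvd_of_mem_primeFactors hp)
      (by linear_combination h)
  simp only [mul_assoc]
  rw [sum_divisors_natAbs_moebius_mul hn.ne', sum_divisors_natAbs_moebius_mul hn.ne',
    Finset.sum_congr rfl fun t ht => by rw [hω ht, hf_prod ht],
    Finset.sum_congr rfl fun t ht => hf_prod ht, ← Finset.prod_one_add,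
    Finset.sum_powerset_card_mul_prod hfp_ne]
end

section
/- Let f be a multiplicative arithmetic function with complex values and let s be a complex number. Assume f(p) ≠ -p^s for every prime p, and assume the series ∑_{n=1}^{∞} |μ(n)| f(n)/n^s, ∑_p f(p)/(p^s + f(p)) (over all primes p), and ∑_{n=1}^{∞} |μ(n)| ω(n) f(n)/n^s all converge absolutely. Then ∑_{n=1}^{∞} |μ(n)| ω(n) f(n)/n^s = (∑_{n=1}^{∞} |μ(n)| f(n)/n^s) · (∑_p f(p)/(p^s + f(p))). -/
/-!
Write `a n = |μ(n)| f(n) / n^s`. Counting `ω(n)` as the number of primes dividing `n`, the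
left-hand side is the double series `∑_p ∑_{p ∣ n} a n`, and absolute convergence of
`∑ ω(n) |a n|` lets us sum over `n` first. For a fixed prime `p`, multiplicativity gives
`a (p m) = 0` if `p ∣ m` and `a (p m) = (f p / p^s) a m` otherwise, so the inner sum
`T_p = ∑_{p ∣ n} a n` satisfies `T_p = (f p / p^s) (A - T_p)` with `A = ∑ a n`, i.e.
`T_p = A f(p) / (p^s + f(p))`.
-/

open ArithmeticFunction

theorem hasSum_primes_ite_dvd {M : Type*} [AddCommMonoid M] [TopologicalSpace M] {a : ℕ → M}
    (ha : a 0 = 0) (n : ℕ) :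
    HasSum (fun p : Nat.Primes => if (p : ℕ) ∣ n then a n else 0)
      (n.primeFactors.card • a n) := by
  rcases eq_or_ne n 0 with rfl | hn
  · simp only [ha, ite_self, Nat.primeFactors_zero, Finset.card_empty, zero_smul]
    exact hasSum_zero
  let S : Finset Nat.Primes := n.primeFactors.subtype Nat.Prime
  have hmem : ∀ p : Nat.Primes, p ∈ S ↔ (p : ℕ) ∣ n := fun p =>
    Finset.mem_subtype.trans (Nat.mem_primeFactors.trans (by simp [p.2, hn]))
  have hcard : S.card = n.primeFactors.card :=
    (Finset.card_subtype _ _).trans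
      (congrArg _ (Finset.filter_true_of_mem fun q hq => Nat.prime_of_mem_primeFactors hq))
  have hsum : ∑ p ∈ S, (if (p : ℕ) ∣ n then a n else 0) = n.primeFactors.card • a n := by
    rw [Finset.sum_congr rfl fun p hp => if_pos ((hmem p).1 hp), Finset.sum_const, hcard]
  exact hsum ▸ hasSum_sum_of_ne_finset_zero fun p hp => if_neg ((hmem p).not.1 hp)

theorem tsum_primeFactors_card_nsmul_eq_tsum_primes {E : Type*} [NormedAddCommGroup E]
    [CompleteSpace E] {a : ℕ → E} (ha : a 0 = 0)
    (hsum : Summable fun n => n.primeFactors.card • ‖a n‖) :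
    ∑' n, n.primeFactors.card • a n =
      ∑' p : Nat.Primes, ∑' n, if (p : ℕ) ∣ n then a n else 0 := by
  have hnorm_sum := hasSum_primes_ite_dvd (a := fun n => ‖a n‖) (by simp [ha])
  have hsummable : Summable (Function.uncurry fun n (p : Nat.Primes) =>
      if (p : ℕ) ∣ n then a n else 0) := by
    refine Summable.of_norm ?_
    rw [summable_prod_of_nonneg fun _ => norm_nonneg _]
    have hnorm : ∀ n (p : Nat.Primes), ‖if (p : ℕ) ∣ n then a n else 0‖ =
        if (p : ℕ) ∣ n then ‖a n‖ else 0 := fun n p =>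
      apply_ite norm _ _ _ |>.trans (by rw [norm_zero])
    simp only [Function.uncurry_apply_pair]
    refine ⟨fun n => ?_, ?_⟩
    · exact (hnorm_sum n).summable.congr fun p => (hnorm n p).symm
    · exact hsum.congr fun n => ((hnorm_sum n).tsum_eq.symm.trans
        (tsum_congr fun p => (hnorm n p).symm))
  calc ∑' n, n.primeFactors.card • a n
      = ∑' n, ∑' p : Nat.Primes, if (p : ℕ) ∣ n then a n else 0 :=
        tsum_congr fun n => (hasSum_primes_ite_dvd ha n).tsum_eq.symm
    _ = _ := hsummable.tsum_comm.symm

theorem tsum_ite_dvd_mul_one_add {𝕜 : Type*} [NormedField 𝕜] [CompleteSpace 𝕜] {p : ℕ}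
    (hp : p ≠ 0) {a : ℕ → 𝕜} (ha : Summable a) {c : 𝕜}
    (hrec : ∀ m, a (p * m) = if p ∣ m then 0 else c * a m) :
    (∑' n, if p ∣ n then a n else 0) * (1 + c) = c * ∑' n, a n := by
  set b : ℕ → 𝕜 := fun n => if p ∣ n then a n else 0 with hb
  have hb_summable : Summable b :=
    (ha.indicator {n | p ∣ n}).congr fun n => by simp [hb, Set.indicator_apply]
  have hsupp : Function.support b ⊆ Set.range (p * ·) := by
    intro n hn
    by_contra hrange
    exact hn (if_neg fun ⟨m, hm⟩ => hrange ⟨m, hm.symm⟩)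
  have hb_mul : ∀ m, b (p * m) = c * (a m - b m) := by
    intro m
    simp only [hb, if_pos (dvd_mul_right p m), hrec m]
    split_ifs <;> ring
  -- reindexing `n = p m` turns `T = ∑' n, b n` into the fixed-point equation `T = c (∑' a - T)`
  have hfix : ∑' n, b n = c * (∑' n, a n - ∑' n, b n) := calc
    ∑' n, b n = ∑' m, b (p * m) := ((mul_right_injective₀ hp).tsum_eq hsupp).symm
    _ = ∑' m, c * (a m - b m) := tsum_congr hb_mul
    _ = _ := by rw [tsum_mul_left, ha.tsum_sub hb_summable]
  linear_combination hfix

noncomputable def squarefreeTerm (f : ArithmeticFunction ℂ) (s : ℂ) (n : ℕ) : ℂ :=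
  ((moebius n).natAbs : ℂ) * f n / (n : ℂ) ^ s

namespace squarefreeTerm

variable {f : ArithmeticFunction ℂ} {s : ℂ}

theorem apply_zero : squarefreeTerm f s 0 = 0 := by
  simp [squarefreeTerm]

theorem apply_prime_mul (hf : f.IsMultiplicative) {p : ℕ} (hp : p.Prime) (m : ℕ) :
    squarefreeTerm f s (p * m) =
      if p ∣ m then 0 else f p / (p : ℂ) ^ s * squarefreeTerm f s m := by
  split_ifs with hpm
  · have hnsq : ¬ Squarefree (p * m) := fun hsq => hp.not_isUnit (hsq p (mul_dvd_mul_left p hpm))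
    simp [squarefreeTerm, moebius_eq_zero_of_not_squarefree hnsq]
  · have hcop : Nat.Coprime p m := (Nat.Prime.coprime_iff_not_dvd hp).2 hpm
    have hps : (p : ℂ) ^ s ≠ 0 :=
      Complex.cpow_ne_zero_iff.2 (.inl (Nat.cast_ne_zero.2 hp.ne_zero))
    simp only [squarefreeTerm, isMultiplicative_moebius.map_mul_of_coprime hcop,
      hf.map_mul_of_coprime hcop, moebius_apply_prime hp, Int.natAbs_mul, Nat.cast_mul,
      Complex.natCast_mul_natCast_cpow]
    field_simp
    simp

theorem tsum_ite_dvd (hf : f.IsMultiplicative) {p : ℕ} (hp : p.Prime)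
    (hfp : f p ≠ -((p : ℂ) ^ s)) (hsum : Summable (squarefreeTerm f s)) :
    ∑' n, (if p ∣ n then squarefreeTerm f s n else 0) =
      (∑' n, squarefreeTerm f s n) * (f p / ((p : ℂ) ^ s + f p)) := by
  have hps : (p : ℂ) ^ s ≠ 0 :=
    Complex.cpow_ne_zero_iff.2 (.inl (Nat.cast_ne_zero.2 hp.ne_zero))
  have hden : (p : ℂ) ^ s + f p ≠ 0 := fun h => hfp (by linear_combination h)
  have key := tsum_ite_dvd_mul_one_add hp.ne_zero hsum (apply_prime_mul hf hp)
  rw [← mul_div_assoc, eq_div_iff hden]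
  field_simp at key
  linear_combination key

end squarefreeTerm

theorem stmt_14_general (f : ArithmeticFunction ℂ) (hf : f.IsMultiplicative) (s : ℂ)
    (hfp : ∀ p : Nat.Primes, f (p : ℕ) ≠ -(((p : ℕ) : ℂ) ^ s))
    (h1 : Summable fun n : ℕ => ‖((moebius n).natAbs : ℂ) * f n / (n : ℂ) ^ s‖)
    (h3 : Summable fun n : ℕ =>
      ‖((moebius n).natAbs : ℂ) * (n.primeFactors.card : ℂ) * f n / (n : ℂ) ^ s‖) :
    ∑' n : ℕ, ((moebius n).natAbs : ℂ) * (n.primeFactors.card : ℂ) * f n / (n : ℂ) ^ s =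
      (∑' n : ℕ, ((moebius n).natAbs : ℂ) * f n / (n : ℂ) ^ s) *
        ∑' p : Nat.Primes, f (p : ℕ) / (((p : ℕ) : ℂ) ^ s + f (p : ℕ)) := by
  have hsum : Summable (squarefreeTerm f s) := h1.of_norm
  have homega : ∀ n : ℕ,
      ((moebius n).natAbs : ℂ) * (n.primeFactors.card : ℂ) * f n / (n : ℂ) ^ s =
        n.primeFactors.card • squarefreeTerm f s n := fun n => by
    rw [squarefreeTerm, nsmul_eq_mul]; ring
  have hsum_omega : Summable fun n => n.primeFactors.card • ‖squarefreeTerm f s n‖ :=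
    h3.congr fun n => by rw [homega, RCLike.norm_nsmul ℝ]
  calc _ = ∑' n : ℕ, n.primeFactors.card • squarefreeTerm f s n := tsum_congr homega
    _ = ∑' p : Nat.Primes, ∑' n, if (p : ℕ) ∣ n then squarefreeTerm f s n else 0 :=
        tsum_primeFactors_card_nsmul_eq_tsum_primes squarefreeTerm.apply_zero hsum_omega
    _ = _ := by
        rw [← tsum_mul_left]
        exact tsum_congr fun p => squarefreeTerm.tsum_ite_dvd hf p.2 (hfp p) hsum

/-- For a multiplicative arithmetic function `f` and `s ∈ ℂ` with
`f p ≠ -p^s` for every prime `p`, given absolute convergence of `∑ |μ(n)| f(n)/n^s`,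
`∑_p f(p)/(p^s + f(p))` and `∑ |μ(n)| ω(n) f(n)/n^s`, we have
`∑ |μ(n)| ω(n) f(n)/n^s = (∑ |μ(n)| f(n)/n^s) · (∑_p f(p)/(p^s + f(p)))`. -/
theorem stmt_14 (f : ArithmeticFunction ℂ) (hf : f.IsMultiplicative) (s : ℂ)
    (hfp : ∀ p : Nat.Primes, f (p : ℕ) ≠ -(((p : ℕ) : ℂ) ^ s))
    (h1 : Summable fun n : ℕ => ‖((moebius n).natAbs : ℂ) * f n / (n : ℂ) ^ s‖)
    (h2 : Summable fun p : Nat.Primes => ‖f (p : ℕ) / (((p : ℕ) : ℂ) ^ s + f (p : ℕ))‖)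
    (h3 : Summable fun n : ℕ =>
      ‖((moebius n).natAbs : ℂ) * (n.primeFactors.card : ℂ) * f n / (n : ℂ) ^ s‖) :
    ∑' n : ℕ, ((moebius n).natAbs : ℂ) * (n.primeFactors.card : ℂ) * f n / (n : ℂ) ^ s =
      (∑' n : ℕ, ((moebius n).natAbs : ℂ) * f n / (n : ℂ) ^ s) *
        ∑' p : Nat.Primes, f (p : ℕ) / (((p : ℕ) : ℂ) ^ s + f (p : ℕ)) :=
  stmt_14_general f hf s hfp h1 h3
end
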